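/- In the group G = ⟨x, y | x² = y⁴ = 1, x y² x = y² x y²⟩ with Y = {x} and g = y x y², the coset g⟨x⟩ = {y x y², y³ x y²} contains two distinct elements both of syllabic length 3 with respect to {x,y}; in particular g⟨x⟩ does not contain a unique element of minimal syllabic length. -/
import Mathlib


namespace Paper

/-- The alternating list `(a, b, a, b, ...)` of length `m`. -/
def altList {α : Type*} (a b : α) : ℕ → List α
  | 0 => []
  | n + 1 => a :: altList b a n

/-- The alternating product `a b a ⋯` of length `m` in a monoid. -/
def altProd {G : Type*} [Monoid G] (a b : G) (m : ℕ) : G := (altList a b m).prod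

variable {G : Type*} [Group G]

/-- The set of syllables of a generating set `X`: nontrivial powers of elements of `X`. -/
def Syll (X : Set G) : Set G := {s | ∃ x ∈ X, ∃ a : ℤ, s = x ^ a ∧ s ≠ 1}

/-- A syllabic word: a list all of whose entries are syllables. -/
def SylWord (X : Set G) (w : List G) : Prop := ∀ s ∈ w, s ∈ Syll X

/-- The syllabic length of an element: minimal length of a syllabic word representing it. -/
noncomputable def sylLen (X : Set G) (g : G) : ℕ :=
  sInf {n | ∃ w : List G, SylWord X w ∧ w.prod = g ∧ w.length = n}

/-- A syllabic word is reduced if its length is the syllabic length of the element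
it represents. -/
def Reduced (X : Set G) (w : List G) : Prop :=
  SylWord X w ∧ w.length = sylLen X w.prod

/-- Elementary M-operation of type I. -/
def MOpI (X : Set G) (w w' : List G) : Prop :=
  ∃ (w₁ w₂ : List G) (s t : G), s ∈ Syll X ∧ t ∈ Syll X ∧
    w = w₁ ++ [s, t] ++ w₂ ∧
    ((s * t ∈ Syll X ∧ w' = w₁ ++ [s * t] ++ w₂) ∨ (s * t = 1 ∧ w' = w₁ ++ w₂))

/-- Elementary M-operation of type II. -/
def MOpII (X : Set G) (w w' : List G) : Prop :=
  ∃ (w₁ w₂ : List G) (s t : G) (m : ℕ), s ∈ Syll X ∧ t ∈ Syll X ∧ 2 ≤ m ∧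
    altProd s t m = altProd t s m ∧ sylLen X (altProd s t m) = m ∧
    w = w₁ ++ altList s t m ++ w₂ ∧ w' = w₁ ++ altList t s m ++ w₂

/-- Elementary M-operation (of type I or type II). -/
def MOp (X : Set G) (w w' : List G) : Prop := MOpI X w w' ∨ MOpII X w w'

/-- A syllabic word is M-reduced if its length cannot be shortened by any finite
sequence of elementary M-operations. -/
def MReduced (X : Set G) (w : List G) : Prop :=
  ∀ w', Relation.ReflTransGen (MOp X) w w' → ¬ w'.length < w.length

/-- Property D: a syllabic word is reduced iff it is M-reduced, and any two reduced
syllabic words representing the same element are connected by a finite sequence of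
elementary M-operations of type II. -/
def PropertyD (X : Set G) : Prop :=
  (∀ w : List G, SylWord X w → (Reduced X w ↔ MReduced X w)) ∧
  (∀ w w' : List G, Reduced X w → Reduced X w' → w.prod = w'.prod →
    Relation.ReflTransGen (MOpII X) w w')

/-- `(G, X)` is a marked group: `X` generates `G`. -/
def Marked (X : Set G) : Prop := Subgroup.closure X = ⊤

/-- `(G, X)` is a strongly marked group. -/
def StronglyMarked (X : Set G) : Prop :=
  Marked X ∧ (1 : G) ∉ X ∧
    ∀ x ∈ X, ∀ y ∈ X, ∀ a b : ℤ, x ^ a ≠ 1 → y ^ b ≠ 1 →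
      (x ^ a * y ^ b ∈ Syll X ∨ x ^ a * y ^ b = 1) → x = y

/-- The data of a Dyer graph: a simplicial graph with edge labels `m ≥ 2` and vertex
labels `f ∈ ℕ_{≥2} ∪ {∞}` such that any edge with `m(e) ≠ 2` has both endpoints
labelled `2`. -/
structure DyerData (V : Type*) where
  adj : V → V → Prop
  symm : ∀ u v, adj u v → adj v u
  loopless : ∀ v, ¬ adj v v
  m : V → V → ℕ
  m_symm : ∀ u v, m u v = m v u
  m_two_le : ∀ u v, adj u v → 2 ≤ m u v
  f : V → ℕ∞
  f_two_le : ∀ v, 2 ≤ f v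
  dyer : ∀ u v, adj u v → m u v ≠ 2 → f u = 2 ∧ f v = 2

/-- The defining relators of the Dyer group of `Δ`. -/
def DyerData.rels {V : Type*} (Δ : DyerData V) : Set (FreeGroup V) :=
  {r | ∃ v, Δ.f v ≠ ⊤ ∧ r = (FreeGroup.of v) ^ (Δ.f v).toNat} ∪
  {r | ∃ u v, Δ.adj u v ∧
    r = altProd (FreeGroup.of u) (FreeGroup.of v) (Δ.m u v) *
        (altProd (FreeGroup.of v) (FreeGroup.of u) (Δ.m u v))⁻¹}

/-- The Dyer group of the data `Δ`. -/
abbrev DyerGroup {V : Type*} (Δ : DyerData V) := PresentedGroup Δ.rels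

/-- The standard generating set of a Dyer group. -/
def DyerGens {V : Type*} (Δ : DyerData V) : Set (DyerGroup Δ) :=
  Set.range (PresentedGroup.of (rels := Δ.rels))


/-- Defining relators of the quasi-Dyer group `QD_{3,2}`:
`x² = y⁴ = 1` and `x y² x = y² x y²`. -/
def qd32Rels : Set (FreeGroup (Fin 2)) :=
  { (FreeGroup.of 0) ^ 2, (FreeGroup.of 1) ^ 4,
    FreeGroup.of 0 * (FreeGroup.of 1) ^ 2 * FreeGroup.of 0 *
      ((FreeGroup.of 1) ^ 2 * FreeGroup.of 0 * (FreeGroup.of 1) ^ 2)⁻¹ }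


section QDModel

/-- Model of `x` in `S₅`: the permutation `(1 2)(3 4)`. -/
def Xp : Equiv.Perm (Fin 5) := Equiv.swap 1 2 * Equiv.swap 3 4
/-- Model of `y` in `S₅`: the 4-cycle `(0 1 3 2)`. -/
def Yp : Equiv.Perm (Fin 5) := Equiv.swap 0 1 * Equiv.swap 1 3 * Equiv.swap 3 2

def fmap : Fin 2 → Equiv.Perm (Fin 5) := ![Xp, Yp]

set_option maxRecDepth 10000 in
lemma rels_hold : ∀ r ∈ qd32Rels, FreeGroup.lift fmap r = 1 := by
  intro r hr
  simp only [qd32Rels, Set.mem_insert_iff, Set.mem_singleton_iff] at hr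
  rcases hr with rfl | rfl | rfl <;>
    simp only [map_mul, map_pow, map_inv, FreeGroup.lift_apply_of, fmap,
      Matrix.cons_val_zero, Matrix.cons_val_one, Matrix.head_cons] <;> decide

/-- The evaluation homomorphism into the `S₅` model. -/
def φ : PresentedGroup qd32Rels →* Equiv.Perm (Fin 5) :=
  PresentedGroup.toGroup rels_hold

lemma φx : φ (PresentedGroup.of 0) = Xp := PresentedGroup.toGroup.of rels_hold
lemma φy : φ (PresentedGroup.of 1) = Yp := PresentedGroup.toGroup.of rels_hold

lemma relmem {r : FreeGroup (Fin 2)} (hr : r ∈ qd32Rels) :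
    PresentedGroup.mk qd32Rels r = 1 :=
  (QuotientGroup.eq_one_iff r).mpr (Subgroup.subset_normalClosure hr)

lemma hx2 : (PresentedGroup.of 0 : PresentedGroup qd32Rels) ^ 2 = 1 := by
  have := relmem (r := (FreeGroup.of 0) ^ 2) (by left; rfl)
  rwa [map_pow] at this

lemma hy4 : (PresentedGroup.of 1 : PresentedGroup qd32Rels) ^ 4 = 1 := by
  have := relmem (r := (FreeGroup.of 1) ^ 4) (by right; left; rfl)
  rwa [map_pow] at this

lemma hbraid : (PresentedGroup.of 0 : PresentedGroup qd32Rels) * PresentedGroup.of 1 ^ 2 *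
    PresentedGroup.of 0
    = PresentedGroup.of 1 ^ 2 * PresentedGroup.of 0 * PresentedGroup.of 1 ^ 2 := by
  have := relmem (r := FreeGroup.of 0 * (FreeGroup.of 1) ^ 2 * FreeGroup.of 0 *
      ((FreeGroup.of 1) ^ 2 * FreeGroup.of 0 * (FreeGroup.of 1) ^ 2)⁻¹) (by right; right; rfl)
  rw [map_mul, map_inv, map_mul, map_mul, map_mul, map_pow, mul_inv_eq_one] at this
  exact this

lemma zpow_two_cases {H : Type*} [Group H] (x : H) (h : x ^ 2 = 1) (a : ℤ) :
    x ^ a = 1 ∨ x ^ a = x := by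
  have h2 : x ^ (2 : ℤ) = 1 := by rw [show (2:ℤ) = ((2:ℕ):ℤ) from rfl, zpow_natCast, h]
  obtain ⟨q, r, hr0, hr2, rfl⟩ : ∃ q r : ℤ, 0 ≤ r ∧ r < 2 ∧ a = 2 * q + r :=
    ⟨a / 2, a % 2, Int.emod_nonneg _ (by norm_num), Int.emod_lt_of_pos _ (by norm_num),
      (Int.mul_ediv_add_emod a 2).symm⟩
  rw [zpow_add, zpow_mul, h2, one_zpow, one_mul]
  interval_cases r
  · left; exact zpow_zero x
  · right; exact zpow_one x

lemma zpow_four_cases {H : Type*} [Group H] (x : H) (h : x ^ 4 = 1) (a : ℤ) :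
    x ^ a = 1 ∨ x ^ a = x ∨ x ^ a = x ^ 2 ∨ x ^ a = x ^ 3 := by
  have h2 : x ^ (4 : ℤ) = 1 := by rw [show (4:ℤ) = ((4:ℕ):ℤ) from rfl, zpow_natCast, h]
  obtain ⟨q, r, hr0, hr2, rfl⟩ : ∃ q r : ℤ, 0 ≤ r ∧ r < 4 ∧ a = 4 * q + r :=
    ⟨a / 4, a % 4, Int.emod_nonneg _ (by norm_num), Int.emod_lt_of_pos _ (by norm_num),
      (Int.mul_ediv_add_emod a 4).symm⟩
  rw [zpow_add, zpow_mul, h2, one_zpow, one_mul]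
  interval_cases r
  · left; exact zpow_zero x
  · right; left; exact zpow_one x
  · right; right; left; rw [show (2:ℤ) = ((2:ℕ):ℤ) from rfl, zpow_natCast]
  · right; right; right; rw [show (3:ℤ) = ((3:ℕ):ℤ) from rfl, zpow_natCast]

lemma phi_ne {a b : PresentedGroup qd32Rels} (h : φ a ≠ φ b) : a ≠ b :=
  fun e => h (congrArg φ e)

end QDModel

theorem statement_11
    (x y g : PresentedGroup qd32Rels)
    (hx : x = PresentedGroup.of 0) (hy : y = PresentedGroup.of 1)
    (hg : g = y * x * y ^ 2)
    (X : Set (PresentedGroup qd32Rels)) (hXdef : X = {x, y}) :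
    g ≠ g * x ∧ g * x = y ^ 3 * x * y ^ 2 ∧
    {k | ∃ h ∈ Subgroup.zpowers x, k = g * h} = {g, g * x} ∧
    sylLen X g = 3 ∧ sylLen X (g * x) = 3 ∧
    ¬ ∃! g₀ : PresentedGroup qd32Rels,
        (∃ h ∈ Subgroup.zpowers x, g₀ = g * h) ∧
        ∀ k, (∃ h ∈ Subgroup.zpowers x, k = g * h) → sylLen X g₀ ≤ sylLen X k := by
  subst hx hy hg hXdef
  set x : PresentedGroup qd32Rels := PresentedGroup.of 0 with hxdef
  set y : PresentedGroup qd32Rels := PresentedGroup.of 1 with hydef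
  have φx' : φ x = Xp := φx
  have φy' : φ y = Yp := φy
  have hx2' : x ^ 2 = 1 := hx2
  have hy4' : y ^ 4 = 1 := hy4
  have hb : x * y ^ 2 * x = y ^ 2 * x * y ^ 2 := hbraid
  have xne1 : x ≠ 1 := phi_ne (by simp only [map_one, φx']; decide)
  have yne1 : y ≠ 1 := phi_ne (by simp only [map_one, φy']; decide)
  have y2ne1 : y ^ 2 ≠ 1 := phi_ne (by simp only [map_one, map_pow, φy']; decide)
  have y3ne1 : y ^ 3 ≠ 1 := phi_ne (by simp only [map_one, map_pow, φy']; decide)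
  -- classification of syllables
  have syll_case : ∀ s ∈ Syll ({x, y} : Set (PresentedGroup qd32Rels)),
      s = x ∨ s = y ∨ s = y ^ 2 ∨ s = y ^ 3 := by
    rintro s ⟨x0, hx0, a, rfl, hne⟩
    simp only [Set.mem_insert_iff, Set.mem_singleton_iff] at hx0
    rcases hx0 with rfl | rfl
    · rcases zpow_two_cases _ hx2' a with h | h
      · exact absurd h hne
      · exact Or.inl h
    · rcases zpow_four_cases _ hy4' a with h | h | h | h
      · exact absurd h hne
      · exact Or.inr (Or.inl h)
      · exact Or.inr (Or.inr (Or.inl h))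
      · exact Or.inr (Or.inr (Or.inr h))
  -- generic lower bound lemma
  have low : ∀ z : PresentedGroup qd32Rels, z ≠ 1 →
      (∀ s, (s = x ∨ s = y ∨ s = y ^ 2 ∨ s = y ^ 3) → z ≠ s) →
      (∀ s t, (s = x ∨ s = y ∨ s = y ^ 2 ∨ s = y ^ 3) →
        (t = x ∨ t = y ∨ t = y ^ 2 ∨ t = y ^ 3) → z ≠ s * t) →
      ∀ n ∈ {n | ∃ w : List (PresentedGroup qd32Rels),
          SylWord {x, y} w ∧ w.prod = z ∧ w.length = n}, 3 ≤ n := by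
    rintro z h0 h1 h2 n ⟨w, hw, hp, rfl⟩
    rcases w with _ | ⟨s, _ | ⟨t, _ | ⟨u, w⟩⟩⟩
    · simp only [List.prod_nil] at hp
      exact absurd hp.symm h0
    · have hs := syll_case s (hw s (by simp))
      simp only [List.prod_cons, List.prod_nil, mul_one] at hp
      exact absurd hp.symm (h1 s hs)
    · have hs := syll_case s (hw s (by simp))
      have ht := syll_case t (hw t (by simp))
      simp only [List.prod_cons, List.prod_nil, mul_one] at hp
      exact absurd hp.symm (h2 s t hs ht)
    · simp only [List.length_cons]; omega
  -- the two coset elements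
  have hgx : y * x * y ^ 2 * x = y ^ 3 * x * y ^ 2 := by
    calc y * x * y ^ 2 * x = y * (x * y ^ 2 * x) := by group
    _ = y * (y ^ 2 * x * y ^ 2) := by rw [hb]
    _ = y ^ 3 * x * y ^ 2 := by group
  -- inequality battery for g = y x y²
  have g0 : y * x * y ^ 2 ≠ 1 := phi_ne (by
    simp only [map_one, map_mul, map_pow, φx', φy']; decide)
  have g1 : ∀ s, (s = x ∨ s = y ∨ s = y ^ 2 ∨ s = y ^ 3) → y * x * y ^ 2 ≠ s := by
    rintro s (rfl | rfl | rfl | rfl) <;>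
      exact phi_ne (by simp only [map_mul, map_pow, φx', φy']; decide)
  have g2 : ∀ s t, (s = x ∨ s = y ∨ s = y ^ 2 ∨ s = y ^ 3) →
      (t = x ∨ t = y ∨ t = y ^ 2 ∨ t = y ^ 3) → y * x * y ^ 2 ≠ s * t := by
    rintro s t (rfl | rfl | rfl | rfl) (rfl | rfl | rfl | rfl) <;>
      exact phi_ne (by simp only [map_mul, map_pow, φx', φy']; decide)
  have gx0 : y ^ 3 * x * y ^ 2 ≠ 1 := phi_ne (by
    simp only [map_one, map_mul, map_pow, φx', φy']; decide)
  have gx1 : ∀ s, (s = x ∨ s = y ∨ s = y ^ 2 ∨ s = y ^ 3) → y ^ 3 * x * y ^ 2 ≠ s := by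
    rintro s (rfl | rfl | rfl | rfl) <;>
      exact phi_ne (by simp only [map_mul, map_pow, φx', φy']; decide)
  have gx2 : ∀ s t, (s = x ∨ s = y ∨ s = y ^ 2 ∨ s = y ^ 3) →
      (t = x ∨ t = y ∨ t = y ^ 2 ∨ t = y ^ 3) → y ^ 3 * x * y ^ 2 ≠ s * t := by
    rintro s t (rfl | rfl | rfl | rfl) (rfl | rfl | rfl | rfl) <;>
      exact phi_ne (by simp only [map_mul, map_pow, φx', φy']; decide)
  -- membership of words of length 3
  have hword : ∀ a b c : PresentedGroup qd32Rels,
      a ∈ Syll ({x, y} : Set (PresentedGroup qd32Rels)) →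
      b ∈ Syll ({x, y} : Set (PresentedGroup qd32Rels)) →
      c ∈ Syll ({x, y} : Set (PresentedGroup qd32Rels)) →
      (3 : ℕ) ∈ {n | ∃ w : List (PresentedGroup qd32Rels),
        SylWord {x, y} w ∧ w.prod = a * b * c ∧ w.length = n} := by
    intro a b c ha hb' hc
    refine ⟨[a, b, c], ?_, ?_, rfl⟩
    · intro s hs
      simp only [List.mem_cons, List.not_mem_nil, or_false] at hs
      rcases hs with rfl | rfl | rfl
      exacts [ha, hb', hc]
    · simp only [List.prod_cons, List.prod_nil, mul_one, mul_assoc]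
  have sx : x ∈ Syll ({x, y} : Set (PresentedGroup qd32Rels)) :=
    ⟨x, Or.inl rfl, 1, (zpow_one x).symm, xne1⟩
  have sy : y ∈ Syll ({x, y} : Set (PresentedGroup qd32Rels)) :=
    ⟨y, Or.inr rfl, 1, (zpow_one y).symm, yne1⟩
  have sy2 : y ^ 2 ∈ Syll ({x, y} : Set (PresentedGroup qd32Rels)) :=
    ⟨y, Or.inr rfl, 2, by rw [show (2:ℤ) = ((2:ℕ):ℤ) from rfl, zpow_natCast], y2ne1⟩
  have sy3 : y ^ 3 ∈ Syll ({x, y} : Set (PresentedGroup qd32Rels)) :=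
    ⟨y, Or.inr rfl, 3, by rw [show (3:ℤ) = ((3:ℕ):ℤ) from rfl, zpow_natCast], y3ne1⟩
  have len_g : sylLen ({x, y} : Set (PresentedGroup qd32Rels)) (y * x * y ^ 2) = 3 := by
    have h3 := hword y x (y ^ 2) sy sx sy2
    have hne : {n | ∃ w : List (PresentedGroup qd32Rels),
        SylWord {x, y} w ∧ w.prod = y * x * y ^ 2 ∧ w.length = n}.Nonempty := ⟨3, h3⟩
    exact le_antisymm (Nat.sInf_le h3) (low _ g0 g1 g2 _ (Nat.sInf_mem hne))
  have len_gx : sylLen ({x, y} : Set (PresentedGroup qd32Rels)) (y ^ 3 * x * y ^ 2) = 3 := by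
    have h3 := hword (y ^ 3) x (y ^ 2) sy3 sx sy2
    have hne : {n | ∃ w : List (PresentedGroup qd32Rels),
        SylWord {x, y} w ∧ w.prod = y ^ 3 * x * y ^ 2 ∧ w.length = n}.Nonempty := ⟨3, h3⟩
    exact le_antisymm (Nat.sInf_le h3) (low _ gx0 gx1 gx2 _ (Nat.sInf_mem hne))
  have hgne : y * x * y ^ 2 ≠ y * x * y ^ 2 * x := by
    intro h
    apply xne1
    have := mul_left_cancel (a := y * x * y ^ 2) (b := 1) (c := x)
    exact (this (by rw [mul_one, ← h])).symm
  have hcoset : {k | ∃ h ∈ Subgroup.zpowers x, k = y * x * y ^ 2 * h}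
      = {y * x * y ^ 2, y * x * y ^ 2 * x} := by
    ext k
    constructor
    · rintro ⟨h, hh, rfl⟩
      obtain ⟨a, rfl⟩ := Subgroup.mem_zpowers_iff.mp hh
      rcases zpow_two_cases _ hx2' a with h' | h' <;> rw [h']
      · left; rw [mul_one]
      · right; rfl
    · rintro (rfl | rfl)
      · exact ⟨1, one_mem _, (mul_one _).symm⟩
      · exact ⟨x, Subgroup.mem_zpowers x, rfl⟩
  refine ⟨hgne, by rw [hgx], hcoset, len_g, by rw [hgx]; exact len_gx, ?_⟩
  rintro ⟨g₀, ⟨hg₀mem, hg₀min⟩, huniq⟩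
  have hmin : ∀ k, (∃ h ∈ Subgroup.zpowers x, k = y * x * y ^ 2 * h) → (3:ℕ) ≤
      sylLen ({x, y} : Set (PresentedGroup qd32Rels)) k := by
    intro k hk
    have : k ∈ {k | ∃ h ∈ Subgroup.zpowers x, k = y * x * y ^ 2 * h} := hk
    rw [hcoset] at this
    rcases this with rfl | rfl
    · rw [len_g]
    · rw [hgx, len_gx]
  have hP : ∀ k, (∃ h ∈ Subgroup.zpowers x, k = y * x * y ^ 2 * h) →
      ((∃ h ∈ Subgroup.zpowers x, k = y * x * y ^ 2 * h) ∧
        ∀ m, (∃ h ∈ Subgroup.zpowers x, m = y * x * y ^ 2 * h) →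
          sylLen ({x, y} : Set (PresentedGroup qd32Rels)) k ≤
          sylLen ({x, y} : Set (PresentedGroup qd32Rels)) m) := by
    intro k hk
    refine ⟨hk, fun m hm => ?_⟩
    have hk3 : sylLen ({x, y} : Set (PresentedGroup qd32Rels)) k = 3 := by
      have : k ∈ {k | ∃ h ∈ Subgroup.zpowers x, k = y * x * y ^ 2 * h} := hk
      rw [hcoset] at this
      rcases this with rfl | rfl
      · exact len_g
      · rw [hgx]; exact len_gx
    rw [hk3]
    exact hmin m hm
  have e1 := huniq (y * x * y ^ 2) (hP _ ⟨1, one_mem _, (mul_one _).symm⟩)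
  have e2 := huniq (y * x * y ^ 2 * x) (hP _ ⟨x, Subgroup.mem_zpowers x, rfl⟩)
  exact hgne (e1.trans e2.symm)


end Paper
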